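/- arXiv:2405.05287 — 4 statements merged into one kernel-verified Lean document; each statement's English description precedes it below -/
import Mathlib

section
/- Let ν ≥ 0 be real and k a positive integer. Then as C → 0⁺, ∫_0^∞ (1 + C·x)^ν / (1 + e^x) dx = ln(2) + Σ_{j=1}^{k−1} (∏_{ℓ=0}^{j−1} (ν − ℓ))·C^j·(1 − 2^{−j})·ζ(j+1) + O(C^k), where ζ is the Riemann zeta function. -/
open MeasureTheory Real Filter Asymptotics Topology

open scoped Nat

/-!
Expanding `1 / (1 + eˣ) = ∑ₙ (-1)ⁿ e^{-(n+1)x}` and integrating term by term identifies the Mellin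
transform of `1 / (1 + eˣ)` with `Γ(s) η(s)`, and `η(s) = (1 - 2^{1-s}) ζ(s)`; at `s = j + 1` this
evaluates the Fermi integrals `∫₀^∞ xʲ / (1 + eˣ) dx`. Replacing `(1 + Cx)^ν` by its Taylor
polynomial of degree `k - 1` therefore produces exactly the claimed finite sum, while for
`0 ≤ C ≤ 1` the Taylor remainder is at most `|∏_{ℓ<k} (ν - ℓ)| / k! · (Cx)ᵏ (1 + x)^ν`, whose
integral against `1 / (1 + eˣ)` is a finite constant times `Cᵏ`.
-/

lemma integrableOn_Ioi_one_add_rpow_mul_exp_neg (a : ℝ) :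
    IntegrableOn (fun x => (1 + x) ^ a * rexp (-x)) (Set.Ioi 0) := by
  refine integrable_of_isBigO_exp_neg one_half_pos ?_ ?_
  · refine ContinuousOn.mul ?_ (by fun_prop)
    exact ContinuousOn.rpow_const (f := fun x : ℝ => 1 + x) (by fun_prop)
      fun x (hx : 0 ≤ x) => Or.inl (by positivity)
  · have h := ((isLittleO_rpow_exp_pos_mul_atTop a one_half_pos).isBigO.comp_tendsto
      (tendsto_atTop_add_const_left _ 1 tendsto_id)).mul (isBigO_refl (fun x => rexp (-x)) atTop)
    refine h.trans (IsBigO.of_bound (rexp (1 / 2)) (Eventually.of_forall fun x => ?_))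
    simp only [Function.comp, id, norm_eq_abs, abs_exp, ← exp_add]
    exact exp_le_exp.2 (by linarith)

lemma integrableOn_Ioi_div_one_add_exp {g : ℝ → ℝ} {c a : ℝ} (hg : Measurable g)
    (hbound : ∀ x ∈ Set.Ioi 0, |g x| ≤ c * (1 + x) ^ a) :
    IntegrableOn (fun x => g x / (1 + rexp x)) (Set.Ioi 0) := by
  refine ((integrableOn_Ioi_one_add_rpow_mul_exp_neg a).const_mul c).mono'
    (hg.div (measurable_const.add measurable_exp)).aestronglyMeasurable ?_
  filter_upwards [ae_restrict_mem measurableSet_Ioi] with x hx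
  have hexp : (1 + rexp x)⁻¹ ≤ rexp (-x) := by
    rw [exp_neg]
    exact inv_anti₀ (exp_pos x) (le_add_of_nonneg_left zero_le_one)
  rw [norm_div, norm_eq_abs, norm_of_nonneg (by positivity), div_eq_mul_inv, ← mul_assoc]
  exact mul_le_mul (hbound x hx) hexp (by positivity) ((abs_nonneg _).trans (hbound x hx))

lemma integrableOn_Ioi_pow_div_one_add_exp (j : ℕ) :
    IntegrableOn (fun x => x ^ j / (1 + rexp x)) (Set.Ioi 0) := by
  refine integrableOn_Ioi_div_one_add_exp (c := 1) (a := j) (by fun_prop) fun x hx => ?_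
  rw [one_mul, rpow_natCast, abs_pow, abs_of_pos hx]
  exact pow_le_pow_left₀ hx.le (by linarith) j

theorem integral_Ioi_inv_one_add_exp : ∫ x in Set.Ioi 0, (1 + rexp x)⁻¹ = log 2 := by
  have hderiv : ∀ x ∈ Set.Ici (0 : ℝ),
      HasDerivAt (fun x => -log (1 + rexp (-x))) (1 + rexp x)⁻¹ x := by
    intro x _
    refine ((((hasDerivAt_neg x).exp).const_add 1).log (by positivity)).neg.congr_deriv ?_
    rw [exp_neg]
    field_simp
    ring
  have hlim : Tendsto (fun x => -log (1 + rexp (-x))) atTop (𝓝 0) := by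
    have h : Tendsto (fun x => 1 + rexp (-x)) atTop (𝓝 1) := by
      simpa using (tendsto_exp_atBot.comp tendsto_neg_atTop_atBot).const_add 1
    simpa using ((continuousAt_log one_ne_zero).tendsto.comp h).neg
  rw [integral_Ioi_of_hasDerivAt_of_tendsto' hderiv
    (by simpa using integrableOn_Ioi_pow_div_one_add_exp 0) hlim]
  norm_num

open Complex in
lemma hasSum_neg_one_pow_div_nat_add_one_cpow {s : ℂ} (hs : 1 < s.re) :
    HasSum (fun n : ℕ => (-1) ^ n / ((n : ℂ) + 1) ^ s) ((1 - 2 ^ (1 - s)) * riemannZeta s) := by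
  have hzeta : HasSum (fun n : ℕ => 1 / ((n : ℂ) + 1) ^ s) (riemannZeta s) := by
    rw [zeta_eq_tsum_one_div_nat_add_one_cpow hs]
    refine Summable.hasSum ?_
    simpa using (summable_nat_add_iff 1).mpr (summable_one_div_nat_cpow.mpr hs)
  have hodd : HasSum (fun m : ℕ => 1 / (((2 * m + 1 : ℕ) : ℂ) + 1) ^ s)
      (2 ^ (-s) * riemannZeta s) := by
    refine (hzeta.mul_left _).congr_fun fun m => ?_
    have : ((2 * m + 1 : ℕ) : ℂ) + 1 = ((2 : ℕ) : ℂ) * ((m + 1 : ℕ) : ℂ) := by push_cast; ring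
    rw [this, natCast_mul_natCast_cpow, cpow_neg]
    push_cast
    field_simp
  have hodd_part : HasSum (fun n : ℕ => if Even n then 0 else 1 / ((n : ℂ) + 1) ^ s)
      (2 ^ (-s) * riemannZeta s) := by
    rw [← zero_add (2 ^ (-s) * riemannZeta s)]
    refine HasSum.even_add_odd ?_ ?_
    · simp only [even_two_mul, if_true]
      exact hasSum_zero
    · simpa only [Nat.not_even_two_mul_add_one, if_false] using hodd
  have hval : (1 - 2 ^ (1 - s)) * riemannZeta s
      = riemannZeta s - 2 * (2 ^ (-s) * riemannZeta s) := by
    rw [sub_eq_add_neg 1 s, cpow_add _ _ two_ne_zero, cpow_one]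
    ring
  -- `(-1)ⁿ aₙ = aₙ - 2 aₙ` on odd `n`, and the odd-indexed terms sum to `2^{-s} ζ(s)`
  rw [hval]
  refine (hzeta.sub (hodd_part.mul_left 2)).congr_fun fun n => ?_
  rcases Nat.even_or_odd n with hn | hn
  · simp [hn, hn.neg_one_pow]
  · simp [hn.neg_one_pow, Nat.not_even_iff_odd.mpr hn]
    ring

lemma hasSum_neg_one_pow_mul_exp_neg_mul {t : ℝ} (ht : 0 < t) :
    HasSum (fun n : ℕ => (-1) ^ n * rexp (-(n + 1) * t)) (1 + rexp t)⁻¹ := by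
  have hq : ‖-rexp (-t)‖ < 1 := by simpa using ht
  have hval : (1 + rexp t)⁻¹ = rexp (-t) * (1 - -rexp (-t))⁻¹ := by
    rw [sub_neg_eq_add, exp_neg]
    field_simp
    ring
  rw [hval]
  refine ((hasSum_geometric_of_norm_lt_one hq).mul_left (rexp (-t))).congr_fun fun n => ?_
  rw [neg_pow (rexp (-t)), ← exp_nat_mul, mul_left_comm, ← exp_add]
  ring_nf

open Complex in
theorem mellin_inv_one_add_exp {s : ℂ} (hs : 1 < s.re) :
    mellin (fun t : ℝ => (((1 + rexp t)⁻¹ : ℝ) : ℂ)) s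
      = Gamma s * ((1 - 2 ^ (1 - s)) * riemannZeta s) := by
  have hmellin := hasSum_mellin (a := fun n : ℕ => (-1 : ℂ) ^ n) (p := fun n => n + 1)
    (F := fun t : ℝ => (((1 + rexp t)⁻¹ : ℝ) : ℂ)) (fun n => Or.inr n.cast_add_one_pos)
    (by linarith) (fun t ht => by
      simpa using hasSum_ofReal.mpr (hasSum_neg_one_pow_mul_exp_neg_mul ht)) ?_
  · refine hmellin.unique <|
      ((hasSum_neg_one_pow_div_nat_add_one_cpow hs).mul_left (Gamma s)).congr_fun fun n => ?_
    push_cast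
    ring
  · refine ((Real.summable_one_div_nat_add_rpow 1 s.re).mpr hs).congr fun n => ?_
    simp [abs_of_pos (n.cast_add_one_pos : (0 : ℝ) < n + 1)]

theorem integral_Ioi_pow_div_one_add_exp {j : ℕ} (hj : 1 ≤ j) :
    ∫ x in Set.Ioi 0, x ^ j / (1 + rexp x)
      = (1 - 2 ^ (-(j : ℝ))) * j ! * (riemannZeta (j + 1)).re := by
  have hs : 1 < ((j : ℂ) + 1).re := by simp; omega
  have hmellin : mellin (fun t : ℝ => (((1 + rexp t)⁻¹ : ℝ) : ℂ)) (j + 1)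
      = ((∫ x in Set.Ioi 0, x ^ j / (1 + rexp x) : ℝ) : ℂ) := by
    rw [mellin, ← integral_complex_ofReal]
    refine setIntegral_congr_fun measurableSet_Ioi fun x _ => ?_
    simp [div_eq_mul_inv]
  have hcoef : (1 : ℂ) - 2 ^ (1 - ((j : ℂ) + 1)) = ((1 - 2 ^ (-(j : ℝ)) : ℝ) : ℂ) := by
    push_cast [Complex.ofReal_cpow zero_le_two]
    ring_nf
  have h := congrArg Complex.re (mellin_inv_one_add_exp hs)
  rw [hmellin, hcoef, Complex.Gamma_nat_eq_factorial, ← mul_assoc, ← Complex.ofReal_natCast,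
    ← Complex.ofReal_mul, Complex.re_ofReal_mul, Complex.ofReal_re] at h
  rw [h]
  ring

lemma integrableOn_Ioi_pow_mul_rpow_div_one_add_exp (k : ℕ) (ν : ℝ) :
    IntegrableOn (fun x => x ^ k * (1 + x) ^ ν / (1 + rexp x)) (Set.Ioi 0) := by
  refine integrableOn_Ioi_div_one_add_exp (c := 1) (a := k + ν) (by fun_prop) fun x hx => ?_
  have hx₀ : 0 < x := hx
  rw [one_mul, abs_of_nonneg (by positivity), rpow_add (by positivity), rpow_natCast]
  gcongr
  linarith

lemma integrableOn_Ioi_one_add_mul_rpow_div_one_add_exp {ν C : ℝ} (hν : 0 ≤ ν) (hC : 0 ≤ C) :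
    IntegrableOn (fun x => (1 + C * x) ^ ν / (1 + rexp x)) (Set.Ioi 0) := by
  refine integrableOn_Ioi_div_one_add_exp (c := (1 + C) ^ ν) (a := ν) (by fun_prop)
    fun x hx => ?_
  have hx₀ : 0 < x := hx
  rw [abs_of_nonneg (by positivity), ← mul_rpow (by positivity) (by positivity)]
  exact rpow_le_rpow (by positivity) (by nlinarith) hν

/-- The Taylor polynomial of degree `k - 1` of `t ↦ (1 + t) ^ ν` at `0`. -/
noncomputable def binomialTaylor (ν : ℝ) (k : ℕ) (t : ℝ) : ℝ :=
  ∑ j ∈ Finset.range k, (∏ ℓ ∈ Finset.range j, (ν - ℓ)) / j ! * t ^ j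

lemma prod_range_succ_sub_eq_mul (ν : ℝ) (i : ℕ) :
    ∏ ℓ ∈ Finset.range (i + 1), (ν - ℓ) = ν * ∏ ℓ ∈ Finset.range i, (ν - 1 - ℓ) := by
  rw [Finset.prod_range_succ', mul_comm]
  push_cast
  simp only [sub_zero, sub_add_eq_sub_sub_swap]

lemma binomialTaylor_succ_zero (ν : ℝ) (k : ℕ) : binomialTaylor ν (k + 1) 0 = 1 := by
  simp [binomialTaylor, Finset.sum_range_succ']

lemma hasDerivAt_binomialTaylor_succ (ν : ℝ) (k : ℕ) (t : ℝ) :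
    HasDerivAt (binomialTaylor ν (k + 1)) (ν * binomialTaylor (ν - 1) k t) t := by
  have h := HasDerivAt.fun_sum (u := Finset.range (k + 1)) fun j _ =>
    (hasDerivAt_pow j t).const_mul ((∏ ℓ ∈ Finset.range j, (ν - ℓ)) / j !)
  refine h.congr_deriv ?_
  rw [Finset.sum_range_succ', binomialTaylor, Finset.mul_sum]
  simp only [CharP.cast_eq_zero, zero_mul, mul_zero, add_zero]
  refine Finset.sum_congr rfl fun i _ => ?_
  rw [prod_range_succ_sub_eq_mul, Nat.factorial_succ]
  push_cast
  field_simp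

lemma max_one_one_add_rpow_le {s t e e' : ℝ} (hs : 0 ≤ s) (hst : s ≤ t) (he : e ≤ e') :
    max 1 ((1 + s) ^ e) ≤ max 1 ((1 + t) ^ e') := by
  refine max_le (le_max_left _ _) ((rpow_le_rpow_of_exponent_le (by linarith) he).trans ?_)
  rcases le_or_gt 0 e' with he' | he'
  · exact (rpow_le_rpow (by linarith) (by linarith) he').trans (le_max_right _ _)
  · exact (rpow_le_one_of_one_le_of_nonpos (by linarith) he'.le).trans (le_max_left _ _)

theorem abs_one_add_rpow_sub_binomialTaylor_le (ν : ℝ) (k : ℕ) {t : ℝ} (ht : 0 ≤ t) :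
    |(1 + t) ^ ν - binomialTaylor ν k t|
      ≤ |∏ ℓ ∈ Finset.range k, (ν - ℓ)| / k ! * t ^ k * max 1 ((1 + t) ^ ν) := by
  induction k generalizing ν t with
  | zero =>
    simp [binomialTaylor, abs_of_nonneg (rpow_nonneg (by linarith : 0 ≤ 1 + t) ν)]
  | succ k ih =>
    set M := max 1 ((1 + t) ^ ν)
    set c := |∏ ℓ ∈ Finset.range (k + 1), (ν - ℓ)| / (k + 1)! with hc
    have hderiv : ∀ s, 0 ≤ s → HasDerivAt (fun s => (1 + s) ^ ν - binomialTaylor ν (k + 1) s)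
        (ν * ((1 + s) ^ (ν - 1) - binomialTaylor (ν - 1) k s)) s := fun s hs => by
      rw [mul_sub]
      refine HasDerivAt.sub ?_ (hasDerivAt_binomialTaylor_succ ν k s)
      simpa using ((hasDerivAt_id s).const_add 1).rpow_const (p := ν) (Or.inl (by positivity))
    have hB : ∀ s, HasDerivAt (fun s => c * s ^ (k + 1) * M) (c * ((k + 1) * s ^ k) * M) s :=
      fun s => by simpa using ((hasDerivAt_pow (k + 1) s).const_mul c).mul_const M
    -- the remainder vanishes at `0`, and its derivative is `ν` times the remainder of order `k`
    -- for the exponent `ν - 1`, which the induction hypothesis bounds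
    refine image_norm_le_of_norm_deriv_right_le_deriv_boundary
      (fun s hs => (hderiv s hs.1).continuousAt.continuousWithinAt)
      (fun s hs => (hderiv s hs.1).hasDerivWithinAt) (by simp [binomialTaylor_succ_zero]) hB
      (fun s hs => ?_) (Set.right_mem_Icc.2 ht)
    calc ‖ν * ((1 + s) ^ (ν - 1) - binomialTaylor (ν - 1) k s)‖
        ≤ |ν| * (|∏ ℓ ∈ Finset.range k, (ν - 1 - ℓ)| / k ! * s ^ k
            * max 1 ((1 + s) ^ (ν - 1))) := by
          rw [norm_mul, norm_eq_abs, norm_eq_abs]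
          gcongr
          exact ih (ν - 1) hs.1
      _ ≤ |ν| * (|∏ ℓ ∈ Finset.range k, (ν - 1 - ℓ)| / k ! * s ^ k * M) := by
          have := hs.1
          gcongr
          exact max_one_one_add_rpow_le hs.1 hs.2.le (by linarith)
      _ = c * ((k + 1) * s ^ k) * M := by
          rw [hc, prod_range_succ_sub_eq_mul, abs_mul, Nat.factorial_succ]
          push_cast
          field_simp

lemma abs_one_add_mul_rpow_sub_binomialTaylor_le {ν C x : ℝ} (k : ℕ) (hν : 0 ≤ ν)
    (hC₀ : 0 ≤ C) (hC₁ : C ≤ 1) (hx : 0 ≤ x) :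
    |(1 + C * x) ^ ν - binomialTaylor ν k (C * x)|
      ≤ |∏ ℓ ∈ Finset.range k, (ν - ℓ)| / k ! * C ^ k * (x ^ k * (1 + x) ^ ν) := by
  have hCx : C * x ≤ x := mul_le_of_le_one_left hx hC₁
  calc |(1 + C * x) ^ ν - binomialTaylor ν k (C * x)|
      ≤ |∏ ℓ ∈ Finset.range k, (ν - ℓ)| / k ! * (C * x) ^ k * max 1 ((1 + C * x) ^ ν) :=
        abs_one_add_rpow_sub_binomialTaylor_le ν k (by positivity)
    _ ≤ |∏ ℓ ∈ Finset.range k, (ν - ℓ)| / k ! * (C * x) ^ k * (1 + x) ^ ν := by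
        gcongr
        exact max_le (one_le_rpow (by linarith [mul_nonneg hC₀ hx]) hν)
          (rpow_le_rpow (by positivity) (by linarith) hν)
    _ = |∏ ℓ ∈ Finset.range k, (ν - ℓ)| / k ! * C ^ k * (x ^ k * (1 + x) ^ ν) := by
        rw [mul_pow]
        ring

lemma binomialTaylor_mul_div_one_add_exp (ν C : ℝ) (k : ℕ) (x : ℝ) :
    binomialTaylor ν k (C * x) / (1 + rexp x) = ∑ j ∈ Finset.range k,
      (∏ ℓ ∈ Finset.range j, (ν - ℓ)) / j ! * C ^ j * (x ^ j / (1 + rexp x)) := by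
  rw [binomialTaylor, Finset.sum_div]
  refine Finset.sum_congr rfl fun j _ => ?_
  rw [mul_pow]
  ring

lemma integrableOn_Ioi_binomialTaylor_mul_div_one_add_exp (ν C : ℝ) (k : ℕ) :
    IntegrableOn (fun x => binomialTaylor ν k (C * x) / (1 + rexp x)) (Set.Ioi 0) := by
  simp_rw [binomialTaylor_mul_div_one_add_exp]
  exact integrable_finsetSum _ fun j _ => (integrableOn_Ioi_pow_div_one_add_exp j).const_mul _

theorem integral_Ioi_binomialTaylor_mul_div_one_add_exp (ν C : ℝ) {k : ℕ} (hk : 0 < k) :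
    ∫ x in Set.Ioi 0, binomialTaylor ν k (C * x) / (1 + rexp x)
      = log 2 + ∑ j ∈ Finset.Icc 1 (k - 1), (∏ ℓ ∈ Finset.range j, (ν - ℓ)) * C ^ j
          * (1 - 2 ^ (-(j : ℝ))) * (riemannZeta (j + 1)).re := by
  simp_rw [binomialTaylor_mul_div_one_add_exp]
  rw [integral_finsetSum _ fun j _ => (integrableOn_Ioi_pow_div_one_add_exp j).const_mul _]
  simp_rw [integral_const_mul]
  rw [Finset.range_eq_Ico, Finset.sum_eq_sum_Ico_succ_bot hk,
    Finset.Icc_sub_one_right_eq_Ico_of_not_isMin (by simpa using hk.ne')]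
  congr 1
  · simp [integral_Ioi_inv_one_add_exp]
  · refine Finset.sum_congr rfl fun j hj => ?_
    rw [integral_Ioi_pow_div_one_add_exp (Finset.mem_Ico.mp hj).1]
    field_simp

/-- As `C → 0⁺`,
`∫_0^∞ (1+Cx)^ν/(1+e^x) dx = ln 2 + Σ_{j=1}^{k−1} (∏_{ℓ<j}(ν−ℓ)) C^j (1−2^{−j}) ζ(j+1) + O(C^k)`. -/
theorem fermi_integral_expansion_increasing (ν : ℝ) (hν : 0 ≤ ν) (k : ℕ) (hk : 0 < k) :
    (fun C : ℝ =>
        (∫ x in Set.Ioi (0 : ℝ), (1 + C * x) ^ ν / (1 + Real.exp x))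
          - (Real.log 2 + ∑ j ∈ Finset.Icc 1 (k - 1),
              (∏ ℓ ∈ Finset.range j, (ν - ℓ)) * C ^ j
                * (1 - 2 ^ (-(j : ℝ))) * (riemannZeta (j + 1)).re))
      =O[𝓝[>] 0] fun C : ℝ => C ^ k := by
  refine isBigO_iff.2 ⟨|∏ ℓ ∈ Finset.range k, (ν - ℓ)| / k ! *
    ∫ x in Set.Ioi 0, x ^ k * (1 + x) ^ ν / (1 + rexp x), ?_⟩
  filter_upwards [Ioc_mem_nhdsGT zero_lt_one] with C ⟨hC₀, hC₁⟩
  rw [← integral_Ioi_binomialTaylor_mul_div_one_add_exp ν C hk,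
    ← integral_sub (integrableOn_Ioi_one_add_mul_rpow_div_one_add_exp hν hC₀.le)
      (integrableOn_Ioi_binomialTaylor_mul_div_one_add_exp ν C k),
    norm_of_nonneg (pow_nonneg hC₀.le k), mul_right_comm, ← integral_const_mul]
  refine norm_integral_le_of_norm_le
    ((integrableOn_Ioi_pow_mul_rpow_div_one_add_exp k ν).const_mul _) ?_
  filter_upwards [ae_restrict_mem measurableSet_Ioi] with x hx
  rw [← sub_div, norm_div, norm_eq_abs, norm_of_nonneg (by positivity), ← mul_div_assoc]
  gcongr
  exact abs_one_add_mul_rpow_sub_binomialTaylor_le k hν hC₀.le hC₁ hx.out.le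
end

section
/- Let D ≥ 2 be an integer, k a positive integer, d > 0, γ > 0, and α, β ≥ 0, q ≥ 0. Suppose R : [0,∞) → ℝ is measurable with |R(y)| ≤ y^k·(α + β·y^q) for all y ≥ 0. For Δ > 0 set T̃ = d·Δ^{1+γ}. Then ∫_Δ^∞ |R(√z)|·z^{(D−2)/2}·e^{−(z−Δ)/T̃} dz = O(Δ^{(k+D)/2 + γ}) as Δ → 0⁺. -/
/-!
With `p = (k + D)/2 - 1`, the hypothesis on `R` bounds the integrand by `α z^p + β z^(p + q/2)`
times the exponential, so it suffices to bound the moments `∫_Δ^∞ z^p e^(-(z-Δ)/T) dz`.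
Shifting `z = Δ + x` and using `(Δ + x)^p ≤ 2^p (Δ^p + x^p)` bounds such a moment by
`2^p (Δ^p T + Γ(p+1) T^(p+1))`. For `T = d Δ^(1+γ)` and `Δ ≤ 1` both terms are `O(Δ^(p+1+γ))`,
because `(1 + γ)(p + 1) ≥ p + 1 + γ`.
-/

open MeasureTheory Real Filter Asymptotics Topology Set

lemma rpow_add_le_two_rpow_mul_add {a b p : ℝ} (ha : 0 ≤ a) (hb : 0 ≤ b) (hp : 0 ≤ p) :
    (a + b) ^ p ≤ 2 ^ p * (a ^ p + b ^ p) := by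
  wlog hab : a ≤ b generalizing a b
  · rw [add_comm a, add_comm (a ^ p)]
    exact this hb ha (le_of_not_ge hab)
  calc (a + b) ^ p ≤ (2 * b) ^ p := by gcongr; linarith
    _ = 2 ^ p * b ^ p := mul_rpow zero_le_two hb
    _ ≤ 2 ^ p * (a ^ p + b ^ p) := by gcongr; exact le_add_of_nonneg_left (rpow_nonneg ha p)

lemma rpow_isBigO_rpow_nhdsGT_zero {a b : ℝ} (hba : b ≤ a) :
    (fun x : ℝ => x ^ a) =O[𝓝[>] 0] fun x => x ^ b := by
  refine IsBigO.of_bound' ?_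
  filter_upwards [Ioo_mem_nhdsGT one_pos] with x ⟨hx0, hx1⟩
  rw [norm_of_nonneg (rpow_nonneg hx0.le a), norm_of_nonneg (rpow_nonneg hx0.le b)]
  exact rpow_le_rpow_of_exponent_ge hx0 hx1.le hba

lemma integrableOn_rpow_mul_exp_neg_div {p T : ℝ} (hp : -1 < p) (hT : 0 < T) :
    IntegrableOn (fun x : ℝ => x ^ p * exp (-x / T)) (Ioi 0) := by
  convert integrableOn_rpow_mul_exp_neg_mul_rpow hp one_pos (inv_pos.2 hT) using 4 with x
  rw [rpow_one, neg_div, div_eq_inv_mul, neg_mul]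

lemma integral_rpow_mul_exp_neg_div {p T : ℝ} (hp : -1 < p) (hT : 0 < T) :
    ∫ x in Ioi 0, x ^ p * exp (-x / T) = Gamma (p + 1) * T ^ (p + 1) := by
  convert integral_rpow_mul_exp_neg_mul_Ioi (neg_lt_iff_pos_add.1 hp) (inv_pos.2 hT) using 1
  · simp_rw [add_sub_cancel_right, neg_div, div_eq_inv_mul]
  · rw [one_div, inv_inv, mul_comm]

lemma setIntegral_Ioi_comp_add_right (f : ℝ → ℝ) (Δ : ℝ) :
    ∫ x in Ioi 0, f (x + Δ) = ∫ z in Ioi Δ, f z := by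
  have h := (measurePreserving_add_right volume Δ).setIntegral_preimage_emb
    (measurableEmbedding_addRight Δ) f (Ioi Δ)
  rwa [preimage_add_const_Ioi, sub_self] at h

lemma integrableOn_Ioi_rpow_mul_exp_neg_sub_div {p Δ T : ℝ} (hp : -1 < p) (hΔ : 0 ≤ Δ)
    (hT : 0 < T) : IntegrableOn (fun z : ℝ => z ^ p * exp (-(z - Δ) / T)) (Ioi Δ) := by
  have h : IntegrableOn (fun z : ℝ => exp (Δ / T) * (z ^ p * exp (-z / T))) (Ioi Δ) :=
    ((integrableOn_rpow_mul_exp_neg_div hp hT).mono_set (Ioi_subset_Ioi hΔ)).const_mul _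
  refine h.congr_fun (fun z _ => ?_) measurableSet_Ioi
  dsimp only
  rw [mul_left_comm, ← exp_add]
  congr 2
  ring

lemma integral_Ioi_rpow_mul_exp_neg_sub_div_le {p Δ T : ℝ} (hp : 0 ≤ p) (hΔ : 0 ≤ Δ)
    (hT : 0 < T) :
    ∫ z in Ioi Δ, z ^ p * exp (-(z - Δ) / T)
      ≤ 2 ^ p * (Δ ^ p * T + Gamma (p + 1) * T ^ (p + 1)) := by
  have hp' : -1 < p := by linarith
  have hexp_int : IntegrableOn (fun x : ℝ => exp (-x / T)) (Ioi 0) := by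
    simpa using integrableOn_rpow_mul_exp_neg_div (p := 0) (by norm_num) hT
  have hexp : ∫ x in Ioi 0, exp (-x / T) = T := by
    simpa using integral_rpow_mul_exp_neg_div (p := 0) (by norm_num) hT
  have hint_Δ := hexp_int.const_mul (Δ ^ p)
  have hint_x := integrableOn_rpow_mul_exp_neg_div hp' hT
  rw [← setIntegral_Ioi_comp_add_right]
  simp_rw [add_sub_cancel_right]
  calc ∫ x in Ioi 0, (x + Δ) ^ p * exp (-x / T)
      ≤ ∫ x in Ioi 0, 2 ^ p * (Δ ^ p * exp (-x / T) + x ^ p * exp (-x / T)) := by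
        refine integral_mono_of_nonneg ?_ ((hint_Δ.add hint_x).const_mul _) ?_
        · refine ae_restrict_of_forall_mem measurableSet_Ioi fun x hx => ?_
          have : 0 ≤ x + Δ := by linarith [mem_Ioi.1 hx]
          positivity
        · refine ae_restrict_of_forall_mem measurableSet_Ioi fun x hx => ?_
          have hsplit := rpow_add_le_two_rpow_mul_add (le_of_lt hx) hΔ hp
          calc (x + Δ) ^ p * exp (-x / T) ≤ 2 ^ p * (x ^ p + Δ ^ p) * exp (-x / T) := by
                gcongr
            _ = 2 ^ p * (Δ ^ p * exp (-x / T) + x ^ p * exp (-x / T)) := by ring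
    _ = 2 ^ p * (Δ ^ p * T + Gamma (p + 1) * T ^ (p + 1)) := by
        rw [integral_const_mul, integral_add hint_Δ hint_x, integral_const_mul, hexp,
          integral_rpow_mul_exp_neg_div hp' hT]

lemma isBigO_integral_Ioi_rpow_mul_exp_neg_sub_div {p d γ : ℝ} (hp : 0 ≤ p) (hd : 0 < d)
    (hγ : 0 ≤ γ) :
    (fun Δ : ℝ => ∫ z in Ioi Δ, z ^ p * exp (-(z - Δ) / (d * Δ ^ (1 + γ))))
      =O[𝓝[>] 0] fun Δ => Δ ^ (p + 1 + γ) := by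
  refine IsBigO.of_bound (2 ^ p * (d + Gamma (p + 1) * d ^ (p + 1))) ?_
  filter_upwards [Ioo_mem_nhdsGT one_pos] with Δ ⟨hΔ0, hΔ1⟩
  set T := d * Δ ^ (1 + γ)
  have hT : 0 < T := by positivity
  have hlin : Δ ^ p * T = d * Δ ^ (p + 1 + γ) := by
    rw [mul_left_comm, ← rpow_add hΔ0, ← add_assoc]
  have hpow : T ^ (p + 1) ≤ d ^ (p + 1) * Δ ^ (p + 1 + γ) := by
    rw [mul_rpow hd.le (rpow_nonneg hΔ0.le _), ← rpow_mul hΔ0.le]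
    exact mul_le_mul_of_nonneg_left
      (rpow_le_rpow_of_exponent_ge hΔ0 hΔ1.le (by nlinarith)) (by positivity)
  rw [norm_of_nonneg (setIntegral_nonneg measurableSet_Ioi fun z hz => by
      have : 0 ≤ z := hΔ0.le.trans (le_of_lt hz)
      positivity),
    norm_of_nonneg (rpow_nonneg hΔ0.le _)]
  calc _ ≤ 2 ^ p * (Δ ^ p * T + Gamma (p + 1) * T ^ (p + 1)) :=
        integral_Ioi_rpow_mul_exp_neg_sub_div_le hp hΔ0.le hT
    _ ≤ 2 ^ p * (d * Δ ^ (p + 1 + γ) + Gamma (p + 1) * (d ^ (p + 1) * Δ ^ (p + 1 + γ))) := by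
        rw [hlin]
        have := Gamma_nonneg_of_nonneg (by linarith : 0 ≤ p + 1)
        gcongr
    _ = 2 ^ p * (d + Gamma (p + 1) * d ^ (p + 1)) * Δ ^ (p + 1 + γ) := by ring

lemma abs_comp_sqrt_mul_rpow_le {R : ℝ → ℝ} {k : ℕ} {α β q : ℝ}
    (hbound : ∀ y ≥ (0 : ℝ), |R y| ≤ y ^ k * (α + β * y ^ q)) (e : ℝ) {z : ℝ} (hz : 0 < z) :
    |R (√z)| * z ^ e ≤ α * z ^ (k / 2 + e) + β * z ^ (k / 2 + e + q / 2) := by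
  have hk : √z ^ k = z ^ ((k : ℝ) / 2) := by
    rw [sqrt_eq_rpow, ← rpow_natCast, ← rpow_mul hz.le, one_div_mul_eq_div]
  have hq : √z ^ q = z ^ (q / 2) := by
    rw [sqrt_eq_rpow, ← rpow_mul hz.le, one_div_mul_eq_div]
  calc |R (√z)| * z ^ e ≤ z ^ ((k : ℝ) / 2) * (α + β * z ^ (q / 2)) * z ^ e := by
        gcongr
        simpa only [hk, hq] using hbound (√z) (sqrt_nonneg z)
    _ = α * z ^ (k / 2 + e) + β * z ^ (k / 2 + e + q / 2) := by
        rw [rpow_add hz, rpow_add hz, rpow_add hz]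
        ring

lemma norm_integral_abs_comp_sqrt_mul_rpow_mul_exp_le {R : ℝ → ℝ} {k : ℕ} {α β q : ℝ}
    (hbound : ∀ y ≥ (0 : ℝ), |R y| ≤ y ^ k * (α + β * y ^ q)) {e Δ T : ℝ}
    (he : -1 < k / 2 + e) (hq : 0 ≤ q) (hΔ : 0 ≤ Δ) (hT : 0 < T) :
    ‖∫ z in Ioi Δ, |R √z| * z ^ e * exp (-(z - Δ) / T)‖
      ≤ α * (∫ z in Ioi Δ, z ^ (k / 2 + e) * exp (-(z - Δ) / T))
        + β * ∫ z in Ioi Δ, z ^ (k / 2 + e + q / 2) * exp (-(z - Δ) / T) := by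
  have hint₁ := (integrableOn_Ioi_rpow_mul_exp_neg_sub_div he hΔ hT).const_mul α
  have hint₂ := (integrableOn_Ioi_rpow_mul_exp_neg_sub_div (p := k / 2 + e + q / 2)
    (by linarith) hΔ hT).const_mul β
  have hnonneg : 0 ≤ᵐ[volume.restrict (Ioi Δ)] fun z => |R √z| * z ^ e * exp (-(z - Δ) / T) :=
    ae_restrict_of_forall_mem measurableSet_Ioi fun z hz => by
      have : 0 ≤ z := hΔ.trans (le_of_lt hz)
      positivity
  rw [norm_of_nonneg (integral_nonneg_of_ae hnonneg), ← integral_const_mul, ← integral_const_mul,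
    ← integral_add hint₁ hint₂]
  refine integral_mono_of_nonneg hnonneg (hint₁.add hint₂)
    (ae_restrict_of_forall_mem measurableSet_Ioi fun z hz => ?_)
  calc |R √z| * z ^ e * exp (-(z - Δ) / T)
      ≤ (α * z ^ (k / 2 + e) + β * z ^ (k / 2 + e + q / 2)) * exp (-(z - Δ) / T) := by
        gcongr
        exact abs_comp_sqrt_mul_rpow_le hbound e (hΔ.trans_lt hz)
    _ = _ := by ring

theorem degenerate_remainder_bound_general (D : ℕ) (hD : 2 ≤ D) (k : ℕ)
    (d γ α β q : ℝ) (hd : 0 < d) (hγ : 0 < γ) (hq : 0 ≤ q)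
    (R : ℝ → ℝ)
    (hbound : ∀ y ≥ (0 : ℝ), |R y| ≤ y ^ k * (α + β * y ^ q)) :
    (fun Δ : ℝ =>
        ∫ z in Set.Ioi Δ,
          |R (Real.sqrt z)| * z ^ (((D : ℝ) - 2) / 2)
            * Real.exp (-(z - Δ) / (d * Δ ^ (1 + γ))))
      =O[𝓝[>] 0] fun Δ : ℝ => Δ ^ (((k : ℝ) + D) / 2 + γ) := by
  set e : ℝ := ((D : ℝ) - 2) / 2
  have hp : 0 ≤ k / 2 + e := by
    have : (2 : ℝ) ≤ D := by exact_mod_cast hD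
    positivity
  have hpq : 0 ≤ k / 2 + e + q / 2 := by positivity
  have hJ := ((isBigO_integral_Ioi_rpow_mul_exp_neg_sub_div hp hd hγ.le).const_mul_left α).add
    (((isBigO_integral_Ioi_rpow_mul_exp_neg_sub_div hpq hd hγ.le).trans
      (rpow_isBigO_rpow_nhdsGT_zero (by linarith))).const_mul_left β)
  rw [show k / 2 + e + 1 + γ = ((k : ℝ) + D) / 2 + γ by ring] at hJ
  refine IsBigO.trans (IsBigO.of_bound' ?_) hJ
  filter_upwards [self_mem_nhdsWithin] with Δ (hΔ : 0 < Δ)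
  exact (norm_integral_abs_comp_sqrt_mul_rpow_mul_exp_le hbound (by linarith) hq hΔ.le
    (by positivity)).trans (le_norm_self _)

/-- Remainder bound for the nonrelativistic degenerate Fermi gas expansion: with
`T̃ = d·Δ^{1+γ}`, `∫_Δ^∞ |R(√z)| z^{(D−2)/2} e^{−(z−Δ)/T̃} dz = O(Δ^{(k+D)/2+γ})` as `Δ → 0⁺`. -/
theorem degenerate_remainder_bound (D : ℕ) (hD : 2 ≤ D) (k : ℕ) (hk : 0 < k)
    (d γ α β q : ℝ) (hd : 0 < d) (hγ : 0 < γ) (hα : 0 ≤ α) (hβ : 0 ≤ β) (hq : 0 ≤ q)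
    (R : ℝ → ℝ) (hmeas : Measurable R)
    (hbound : ∀ y ≥ (0 : ℝ), |R y| ≤ y ^ k * (α + β * y ^ q)) :
    (fun Δ : ℝ =>
        ∫ z in Set.Ioi Δ,
          |R (Real.sqrt z)| * z ^ (((D : ℝ) - 2) / 2)
            * Real.exp (-(z - Δ) / (d * Δ ^ (1 + γ))))
      =O[𝓝[>] 0] fun Δ : ℝ => Δ ^ (((k : ℝ) + D) / 2 + γ) :=
  degenerate_remainder_bound_general D hD k d γ α β q hd hγ hq R hbound
end

section
/- Let m > 0, D ≥ 2 an integer, k a positive integer, and let G : [0,∞) → ℝ be k-times continuously differentiable with each of G, G', …, G^{(k)} polynomially bounded. Let b ∈ ℝ, μ = m + b·T, T̃ = T/m, and f_FD(p) = 1/(e^{(√(p²+m²)−μ)/T} + 1). Then, as T̃ → 0⁺, ∫_0^∞ p^{D−1}·G(p)·f_FD(p) dp = Σ_{n=0}^{k−1} a_n(m)·m^D·T̃^{(n+D)/2}·∫_0^∞ x^{(n+D−2)/2}/(1 + e^{x−b}) dx + O(T̃^{(k+D)/2}), where a_n(m) = (1/n!)·(d^n/dy^n)|_{y=0} [(y²+1)·(y²+2)^{(D−2)/2}·G(m·y·√(y²+2))],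 and the implied constant in the error term can be chosen uniformly for b in any fixed set that is bounded above. -/
/-!
Substituting `√(p² + m²) = m (1 + T̃ x)`, i.e. `p = m y √(y² + 2)` with `y = √(T̃ x)`, turns the
integral into `m^D T̃^{D/2} ∫₀^∞ x^{(D-2)/2} H(√(T̃ x)) / (1 + e^{x-b}) dx`, where
`H y = (y² + 1) (y² + 2)^{(D-2)/2} G(m y √(y² + 2))` is the function whose Taylor coefficients
are the `a_n`. Taylor's theorem on `[0, 1]` and the polynomial growth of `H` beyond `1` give
`|H y - ∑_{n<k} a_n yⁿ| ≤ C (y^k + y^N)`. For `T̃ ≤ 1` and `b ≤ bmax` the remainder integrand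
is then at most `C e^{bmax} T̃^{k/2} (x^{k/2} + x^{N/2}) x^{(D-2)/2} e^{-x}`, whose integral is a
sum of two Gamma values independent of `T̃` and `b`.
-/

open MeasureTheory Real Set

lemma iteratedDerivWithin_congr_set {𝕜 F : Type*} [NontriviallyNormedField 𝕜]
    [NormedAddCommGroup F] [NormedSpace 𝕜 F] {f : 𝕜 → F} {s t : Set 𝕜} {x : 𝕜}
    (h : s =ᶠ[nhds x] t) (n : ℕ) : iteratedDerivWithin n f s x = iteratedDerivWithin n f t x := by
  simp only [iteratedDerivWithin, iteratedFDerivWithin_congr_set h]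

lemma exists_taylor_remainder_le_Icc {H : ℝ → ℝ} {k : ℕ} (hH : ContDiffOn ℝ k H (Ici 0)) :
    ∃ M, ∀ y ∈ Icc (0 : ℝ) 1,
      |H y - ∑ n ∈ Finset.range k, iteratedDerivWithin n H (Ici 0) 0 / n.factorial * y ^ n|
        ≤ M * y ^ k := by
  cases k with
  | zero =>
    obtain ⟨M, hM⟩ := isCompact_Icc.exists_bound_of_continuousOn
      (hH.continuousOn.mono Icc_subset_Ici_self)
    exact ⟨M, fun y hy => by simpa using hM y hy⟩
  | succ n =>
    obtain ⟨M, hM⟩ := exists_taylor_mean_remainder_bound zero_le_one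
      (hH.mono Icc_subset_Ici_self)
    have hIcc : Icc (0 : ℝ) 1 =ᶠ[nhds 0] Ici 0 := by
      filter_upwards [Iio_mem_nhds zero_lt_one] with z hz
      exact propext ⟨fun h => h.1, fun h => ⟨h, le_of_lt hz⟩⟩
    refine ⟨M, fun y hy => ?_⟩
    have htaylor : taylorWithinEval H n (Icc 0 1) 0 y
        = ∑ i ∈ Finset.range (n + 1), iteratedDerivWithin i H (Ici 0) 0 / i.factorial * y ^ i := by
      rw [taylor_within_apply]
      refine Finset.sum_congr rfl fun i _ => ?_
      rw [iteratedDerivWithin_congr_set hIcc, smul_eq_mul, sub_zero]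
      ring
    simpa [htaylor] using hM y hy

lemma exists_taylor_remainder_le {H : ℝ → ℝ} {k : ℕ} (hH : ContDiffOn ℝ k H (Ici 0)) {C q : ℝ}
    (hHb : ∀ y ≥ 0, |H y| ≤ C * (1 + y) ^ q) :
    ∃ C' > 0, ∃ N : ℕ, k ≤ N ∧ ∀ y ≥ 0,
      |H y - ∑ n ∈ Finset.range k, iteratedDerivWithin n H (Ici 0) 0 / n.factorial * y ^ n|
        ≤ C' * (y ^ k + y ^ N) := by
  set a : ℕ → ℝ := fun n => iteratedDerivWithin n H (Ici 0) 0 / n.factorial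
  obtain ⟨M, hM⟩ := exists_taylor_remainder_le_Icc hH
  have hM0 : 0 ≤ M := by simpa using (abs_nonneg _).trans (hM 1 (right_mem_Icc.2 zero_le_one))
  have hC0 : 0 ≤ C := by simpa using (abs_nonneg _).trans (hHb 0 le_rfl)
  set N := max k ⌈q⌉₊
  set A := C * 2 ^ N + ∑ n ∈ Finset.range k, |a n|
  have hA0 : 0 ≤ A := by positivity
  have hfar : ∀ y ≥ 1, |H y - ∑ n ∈ Finset.range k, a n * y ^ n| ≤ A * y ^ N := by
    intro y hy
    have hHy : |H y| ≤ C * 2 ^ N * y ^ N := calc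
      |H y| ≤ C * (1 + y) ^ q := hHb y (by linarith)
      _ ≤ C * (1 + y) ^ (N : ℝ) := by
        gcongr
        · linarith
        · exact (Nat.le_ceil q).trans (by exact_mod_cast le_max_right _ _)
      _ ≤ C * (2 * y) ^ N := by rw [rpow_natCast]; gcongr; linarith
      _ = C * 2 ^ N * y ^ N := by ring
    have hpoly : |∑ n ∈ Finset.range k, a n * y ^ n| ≤ (∑ n ∈ Finset.range k, |a n|) * y ^ N := by
      rw [Finset.sum_mul]
      refine (Finset.abs_sum_le_sum_abs _ _).trans (Finset.sum_le_sum fun n hn => ?_)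
      rw [abs_mul, abs_of_nonneg (pow_nonneg (zero_le_one.trans hy) _)]
      exact mul_le_mul_of_nonneg_left
        (pow_le_pow_right₀ hy ((Finset.mem_range.1 hn).le.trans (le_max_left _ _))) (abs_nonneg _)
    calc _ ≤ |H y| + |∑ n ∈ Finset.range k, a n * y ^ n| := abs_sub _ _
      _ ≤ A * y ^ N := by linarith
  refine ⟨M + A + 1, by positivity, N, le_max_left _ _, fun y hy => ?_⟩
  rcases le_total y 1 with hy1 | hy1
  · calc _ ≤ M * y ^ k := hM y ⟨hy, hy1⟩
      _ ≤ (M + A + 1) * (y ^ k + y ^ N) := by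
        gcongr; · linarith
        exact le_add_of_nonneg_right (by positivity)
  · calc _ ≤ A * y ^ N := hfar y hy1
      _ ≤ (M + A + 1) * (y ^ k + y ^ N) := by
        gcongr; · linarith
        exact le_add_of_nonneg_left (by positivity)

noncomputable def fermiProfile (m r : ℝ) (G : ℝ → ℝ) (y : ℝ) : ℝ :=
  (y ^ 2 + 1) * (y ^ 2 + 2) ^ r * G (m * y * √(y ^ 2 + 2))

lemma contDiffOn_fermiProfile {m : ℝ} (hm : 0 ≤ m) (r : ℝ) {n : WithTop ℕ∞} {G : ℝ → ℝ}
    (hG : ContDiffOn ℝ n G (Ici 0)) : ContDiffOn ℝ n (fermiProfile m r G) (Ici 0) := by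
  have hpos : ∀ y : ℝ, y ^ 2 + 2 ≠ 0 := fun y => by positivity
  have hsqrt : ContDiff ℝ n fun y : ℝ => √(y ^ 2 + 2) :=
    contDiff_iff_contDiffAt.2 fun y => (by fun_prop : ContDiffAt ℝ n _ y).sqrt (hpos y)
  have hrpow : ContDiff ℝ n fun y : ℝ => (y ^ 2 + 2) ^ r :=
    contDiff_iff_contDiffAt.2 fun y => (by fun_prop : ContDiffAt ℝ n _ y).rpow_const_of_ne (hpos y)
  have hG' : ContDiffOn ℝ n (fun y => G (m * y * √(y ^ 2 + 2))) (Ici 0) :=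
    hG.comp ((contDiff_const.mul contDiff_id).mul hsqrt).contDiffOn
      fun y (hy : y ∈ Ici 0) => by simp only [mem_Ici] at hy ⊢; positivity
  exact (((contDiff_id.pow 2).add contDiff_const).mul hrpow).contDiffOn.mul hG'

lemma abs_fermiProfile_le {m r C q : ℝ} {G : ℝ → ℝ} (hm : 0 ≤ m) (hr : 0 ≤ r) (hq : 0 ≤ q)
    (hGb : ∀ p ≥ 0, |G p| ≤ C * (1 + p) ^ q) {y : ℝ} (hy : 0 ≤ y) :
    |fermiProfile m r G y| ≤ 2 ^ r * C * (1 + 2 * m) ^ q * (1 + y) ^ (2 + 2 * r + 2 * q) := by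
  have hC : 0 ≤ C := by simpa using (abs_nonneg _).trans (hGb 0 le_rfl)
  have ht : 0 < 1 + y := by linarith
  have hsqrt : √(y ^ 2 + 2) ≤ y + 2 := (sqrt_le_left (by linarith)).2 (by nlinarith)
  have hfirst : y ^ 2 + 1 ≤ (1 + y) ^ (2 : ℝ) := by rw [rpow_two]; nlinarith
  have hsecond : (y ^ 2 + 2) ^ r ≤ 2 ^ r * (1 + y) ^ (2 * r) := calc
    (y ^ 2 + 2) ^ r ≤ (2 * (1 + y) ^ (2 : ℝ)) ^ r := by
      gcongr; rw [rpow_two]; nlinarith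
    _ = 2 ^ r * (1 + y) ^ (2 * r) := by
      rw [mul_rpow (by norm_num) (by positivity), ← rpow_mul ht.le]
  have harg : 1 + m * y * √(y ^ 2 + 2) ≤ (1 + 2 * m) * (1 + y) ^ (2 : ℝ) := by
    rw [rpow_two]
    have : m * y * √(y ^ 2 + 2) ≤ m * (y * (y + 2)) := by
      rw [mul_assoc]; gcongr
    nlinarith [mul_nonneg hm hy]
  have hthird : |G (m * y * √(y ^ 2 + 2))| ≤ C * (1 + 2 * m) ^ q * (1 + y) ^ (2 * q) := calc
    _ ≤ C * (1 + m * y * √(y ^ 2 + 2)) ^ q := hGb _ (by positivity)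
    _ ≤ C * ((1 + 2 * m) * (1 + y) ^ (2 : ℝ)) ^ q := by gcongr
    _ = C * (1 + 2 * m) ^ q * (1 + y) ^ (2 * q) := by
      rw [mul_rpow (by positivity) (by positivity), ← rpow_mul ht.le, mul_assoc]
  rw [fermiProfile, abs_mul, abs_mul, abs_of_nonneg (by positivity : (0 : ℝ) ≤ y ^ 2 + 1),
    abs_of_nonneg (by positivity : (0 : ℝ) ≤ (y ^ 2 + 2) ^ r), rpow_add ht, rpow_add ht]
  calc _ ≤ (1 + y) ^ (2 : ℝ) * (2 ^ r * (1 + y) ^ (2 * r))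
        * (C * (1 + 2 * m) ^ q * (1 + y) ^ (2 * q)) := by gcongr
    _ = _ := by ring

lemma integral_Ioi_eq_integral_sqrt_mul_add_two (F : ℝ → ℝ) :
    ∫ p in Ioi 0, F p = ∫ u in Ioi 0, (u + 1) / √(u * (u + 2)) * F √(u * (u + 2)) := by
  set φ : ℝ → ℝ := fun u => √(u * (u + 2))
  have hderiv : ∀ u ∈ Ioi (0 : ℝ), HasDerivWithinAt φ ((u + 1) / φ u) (Ioi 0) u := by
    intro u (hu : 0 < u)
    have hpoly : HasDerivAt (fun u : ℝ => u * (u + 2)) (2 * (u + 1)) u :=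
      ((hasDerivAt_id u).mul ((hasDerivAt_id u).add_const 2)).congr_deriv (by simp; ring)
    refine ((hpoly.sqrt (by positivity)).hasDerivWithinAt).congr_deriv ?_
    simp only [φ]
    field_simp
  have hmono : StrictMonoOn φ (Ioi 0) := fun u (hu : 0 < u) v _ huv =>
    sqrt_lt_sqrt (by positivity) (by nlinarith)
  have himage : φ '' Ioi 0 = Ioi 0 := by
    refine Subset.antisymm (image_subset_iff.2 fun u (hu : 0 < u) => by
      show 0 < φ u; positivity) fun p (hp : 0 < p) => ?_
    have hroot : 1 < √(1 + p ^ 2) := lt_sqrt_of_sq_lt (by nlinarith)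
    refine ⟨√(1 + p ^ 2) - 1, sub_pos.2 hroot, ?_⟩
    have hsq := sq_sqrt (by positivity : (0 : ℝ) ≤ 1 + p ^ 2)
    show √((√(1 + p ^ 2) - 1) * (√(1 + p ^ 2) - 1 + 2)) = p
    rw [show (√(1 + p ^ 2) - 1) * (√(1 + p ^ 2) - 1 + 2) = p ^ 2 by nlinarith, sqrt_sq hp.le]
  conv_lhs => rw [← himage]
  rw [integral_image_eq_integral_abs_deriv_smul measurableSet_Ioi hderiv hmono.injOn]
  refine setIntegral_congr_fun measurableSet_Ioi fun u (hu : 0 < u) => ?_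
  rw [smul_eq_mul, abs_of_pos (by positivity)]

lemma integral_Ioi_eq_integral_energy_subst {m T : ℝ} (hm : 0 < m) (hT : 0 < T) (F : ℝ → ℝ) :
    ∫ p in Ioi 0, F p = m * T * ∫ x in Ioi 0,
      (T * x + 1) / √(T * x * (T * x + 2)) * F (m * √(T * x * (T * x + 2))) := by
  have hscaleT := integral_comp_mul_left_Ioi
    (fun u => (u + 1) / √(u * (u + 2)) * F (m * √(u * (u + 2)))) 0 hT
  have hscaleM := integral_comp_mul_left_Ioi F 0 hm
  rw [mul_zero] at hscaleT hscaleM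
  rw [hscaleT, ← integral_Ioi_eq_integral_sqrt_mul_add_two (F <| m * ·),
    hscaleM, smul_eq_mul, smul_eq_mul]
  field_simp

lemma fermi_integrand_energy_subst {m T b x : ℝ} (hm : 0 < m) (hT : 0 < T) (hx : 0 < x)
    {D : ℕ} (hD : 2 ≤ D) (G : ℝ → ℝ) :
    m * T * ((T * x + 1) / √(T * x * (T * x + 2)) *
      ((m * √(T * x * (T * x + 2))) ^ (D - 1) * G (m * √(T * x * (T * x + 2))) /
        (exp ((√((m * √(T * x * (T * x + 2))) ^ 2 + m ^ 2) - (m + b * (m * T))) / (m * T)) + 1)))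
    = m ^ D * T ^ ((D : ℝ) / 2) * (x ^ (((D : ℝ) - 2) / 2)
        * fermiProfile m (((D : ℝ) - 2) / 2) G √(T * x) / (1 + exp (x - b))) := by
  set r : ℝ := ((D : ℝ) - 2) / 2
  set u := T * x
  have hu : 0 < u := by positivity
  set s := √(u * (u + 2))
  have hs : 0 < s := by positivity
  have hs2 : s ^ 2 = u * (u + 2) := sq_sqrt (by positivity)
  have henergy : √((m * s) ^ 2 + m ^ 2) = m * (u + 1) := by
    rw [show (m * s) ^ 2 + m ^ 2 = (m * (u + 1)) ^ 2 by rw [mul_pow, hs2]; ring,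
      sqrt_sq (by positivity)]
  have hexponent : (m * (u + 1) - (m + b * (m * T))) / (m * T) = x - b := by
    field_simp; ring
  have hprofile : fermiProfile m r G √u = (u + 1) * (u + 2) ^ r * G (m * s) := by
    rw [fermiProfile, sq_sqrt hu.le, mul_assoc m, ← sqrt_mul hu.le]
  have hpow : s ^ (D - 1) = (u * (u + 2)) ^ r * s := by
    have hcast : (D : ℝ) - 2 = ((D - 2 : ℕ) : ℝ) := by push_cast [Nat.cast_sub hD]; ring
    rw [rpow_div_two_eq_sqrt _ (by positivity), hcast, rpow_natCast, ← pow_succ]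
    congr 1
    omega
  have hT' : T ^ ((D : ℝ) / 2) = T * T ^ r := by
    rw [show (D : ℝ) / 2 = 1 + r by simp only [r]; ring, rpow_add hT, rpow_one]
  have hmD : m ^ D = m * m ^ (D - 1) := by rw [← pow_succ', Nat.sub_add_cancel (by omega)]
  rw [henergy, hexponent, hprofile, mul_pow, hpow, mul_rpow hu.le (by positivity),
    mul_rpow hT.le hx.le, hT', hmD, add_comm (exp _)]
  field_simp

lemma inv_one_add_exp_sub_le {b bmax : ℝ} (hb : b ≤ bmax) (x : ℝ) :
    (1 + exp (x - b))⁻¹ ≤ exp bmax * exp (-x) := calc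
  (1 + exp (x - b))⁻¹ ≤ (exp (x - b))⁻¹ := inv_anti₀ (exp_pos _) (by linarith)
  _ = exp b * exp (-x) := by rw [← exp_neg, ← exp_add]; ring_nf
  _ ≤ exp bmax * exp (-x) := by gcongr

lemma integrableOn_rpow_mul_exp_neg {t : ℝ} (ht : -1 < t) :
    IntegrableOn (fun x => x ^ t * exp (-x)) (Ioi 0) := by
  simpa [mul_comm] using GammaIntegral_convergent (s := t + 1) (by linarith)

lemma integral_rpow_mul_exp_neg {t : ℝ} (ht : -1 < t) :
    ∫ x in Ioi 0, x ^ t * exp (-x) = Gamma (t + 1) := by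
  simp [Gamma_eq_integral (s := t + 1) (by linarith), mul_comm]

lemma integrableOn_rpow_div_one_add_exp {t : ℝ} (ht : -1 < t) (b : ℝ) :
    IntegrableOn (fun x => x ^ t / (1 + exp (x - b))) (Ioi 0) := by
  refine ((integrableOn_rpow_mul_exp_neg ht).const_mul (exp b)).mono'
    ((ContinuousOn.div (continuousOn_id.rpow_const fun x hx => Or.inl (ne_of_gt hx))
      (by fun_prop) fun x _ => by positivity).aestronglyMeasurable measurableSet_Ioi) ?_
  refine (ae_restrict_iff' measurableSet_Ioi).2 (.of_forall fun x (hx : 0 < x) => ?_)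
  rw [norm_div, norm_of_nonneg (by positivity), norm_of_nonneg (by positivity), div_eq_mul_inv]
  calc x ^ t * (1 + exp (x - b))⁻¹ ≤ x ^ t * (exp b * exp (-x)) := by
        gcongr; exact inv_one_add_exp_sub_le le_rfl x
    _ = _ := by ring

lemma sqrt_mul_pow {T x : ℝ} (hT : 0 ≤ T) (hx : 0 ≤ x) (n : ℕ) :
    √(T * x) ^ n = T ^ ((n : ℝ) / 2) * x ^ ((n : ℝ) / 2) := by
  rw [← rpow_natCast, ← rpow_div_two_eq_sqrt _ (mul_nonneg hT hx), mul_rpow hT hx]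

section Remainder

variable {R : ℝ → ℝ} {C s T b bmax : ℝ} {k N : ℕ}

lemma abs_fermi_remainder_le (hkN : k ≤ N) (hR : ∀ y ≥ 0, |R y| ≤ C * (y ^ k + y ^ N))
    (hT : 0 < T) (hT1 : T ≤ 1) (hb : b ≤ bmax) {x : ℝ} (hx : 0 < x) :
    |x ^ s * R √(T * x) / (1 + exp (x - b))|
      ≤ C * exp bmax * T ^ ((k : ℝ) / 2)
        * (x ^ (s + k / 2) * exp (-x) + x ^ (s + N / 2) * exp (-x)) := by
  have hC : 0 ≤ C := by
    have := (abs_nonneg _).trans (hR 1 zero_le_one)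
    norm_num at this
    linarith
  have hTN : T ^ ((N : ℝ) / 2) ≤ T ^ ((k : ℝ) / 2) :=
    rpow_le_rpow_of_exponent_ge hT hT1 (by gcongr)
  have hRx : |R √(T * x)| ≤ C * T ^ ((k : ℝ) / 2) * (x ^ ((k : ℝ) / 2) + x ^ ((N : ℝ) / 2)) := by
    refine (hR _ (sqrt_nonneg _)).trans ?_
    rw [sqrt_mul_pow hT.le hx.le, sqrt_mul_pow hT.le hx.le, mul_assoc]
    gcongr
    nlinarith [rpow_nonneg hx.le ((N : ℝ) / 2), rpow_nonneg hT.le ((k : ℝ) / 2)]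
  rw [abs_div, abs_mul, abs_of_pos (rpow_pos_of_pos hx s),
    abs_of_pos (by positivity : (0 : ℝ) < 1 + exp (x - b)), div_eq_mul_inv, rpow_add hx,
    rpow_add hx]
  calc x ^ s * |R √(T * x)| * (1 + exp (x - b))⁻¹
      ≤ x ^ s * (C * T ^ ((k : ℝ) / 2) * (x ^ ((k : ℝ) / 2) + x ^ ((N : ℝ) / 2)))
        * (exp bmax * exp (-x)) :=
        mul_le_mul (mul_le_mul_of_nonneg_left hRx (by positivity)) (inv_one_add_exp_sub_le hb x)
          (by positivity) (by positivity)
    _ = _ := by ring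

lemma integrableOn_fermi_majorant (hs : 0 ≤ s) (k N : ℕ) :
    IntegrableOn (fun x => x ^ (s + k / 2) * exp (-x) + x ^ (s + N / 2) * exp (-x)) (Ioi 0) :=
  (integrableOn_rpow_mul_exp_neg (neg_one_lt_zero.trans_le (by positivity))).add
    (integrableOn_rpow_mul_exp_neg (neg_one_lt_zero.trans_le (by positivity)))

lemma integrableOn_fermi_remainder (hRc : ContinuousOn R (Ici 0)) (hs : 0 ≤ s) (hkN : k ≤ N)
    (hR : ∀ y ≥ 0, |R y| ≤ C * (y ^ k + y ^ N)) (hT : 0 < T) (hT1 : T ≤ 1) (hb : b ≤ bmax) :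
    IntegrableOn (fun x => x ^ s * R √(T * x) / (1 + exp (x - b))) (Ioi 0) := by
  have hcont : ContinuousOn (fun x => x ^ s * R √(T * x) / (1 + exp (x - b))) (Ioi 0) :=
    ((continuousOn_id.rpow_const fun x hx => Or.inl (ne_of_gt hx)).mul
      (hRc.comp (by fun_prop) fun x _ => sqrt_nonneg _)).div (by fun_prop)
      fun x _ => by positivity
  refine ((integrableOn_fermi_majorant hs k N).const_mul (C * exp bmax * T ^ ((k : ℝ) / 2))).mono'
    (hcont.aestronglyMeasurable measurableSet_Ioi) ?_
  exact (ae_restrict_iff' measurableSet_Ioi).2 (.of_forall fun x hx => by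
    simpa only [norm_eq_abs] using abs_fermi_remainder_le hkN hR hT hT1 hb hx)

lemma abs_integral_fermi_remainder_le (hs : 0 ≤ s) (hkN : k ≤ N)
    (hR : ∀ y ≥ 0, |R y| ≤ C * (y ^ k + y ^ N)) (hT : 0 < T) (hT1 : T ≤ 1) (hb : b ≤ bmax) :
    |∫ x in Ioi 0, x ^ s * R √(T * x) / (1 + exp (x - b))|
      ≤ C * exp bmax * (Gamma (s + k / 2 + 1) + Gamma (s + N / 2 + 1)) * T ^ ((k : ℝ) / 2) := by
  have hpointwise : ∀ᵐ x ∂volume.restrict (Ioi 0), ‖x ^ s * R √(T * x) / (1 + exp (x - b))‖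
      ≤ C * exp bmax * T ^ ((k : ℝ) / 2)
        * (x ^ (s + k / 2) * exp (-x) + x ^ (s + N / 2) * exp (-x)) :=
    (ae_restrict_iff' measurableSet_Ioi).2 (.of_forall fun x hx => by
      simpa only [norm_eq_abs] using abs_fermi_remainder_le hkN hR hT hT1 hb hx)
  rw [← norm_eq_abs]
  refine (norm_integral_le_of_norm_le
    ((integrableOn_fermi_majorant hs k N).const_mul _) hpointwise).trans_eq ?_
  have hexp : ∀ n : ℕ, -1 < s + n / 2 := fun n => neg_one_lt_zero.trans_le (by positivity)
  rw [integral_const_mul, integral_add (integrableOn_rpow_mul_exp_neg (hexp k))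
    (integrableOn_rpow_mul_exp_neg (hexp N)), integral_rpow_mul_exp_neg (hexp k),
    integral_rpow_mul_exp_neg (hexp N)]
  ring


lemma abs_integral_fermi_sub_sum_le {H : ℝ → ℝ} (hH : ContinuousOn H (Ici 0)) (a : ℕ → ℝ)
    (hs : 0 ≤ s) (hkN : k ≤ N)
    (hR : ∀ y ≥ 0, |H y - ∑ n ∈ Finset.range k, a n * y ^ n| ≤ C * (y ^ k + y ^ N))
    (hT : 0 < T) (hT1 : T ≤ 1) (hb : b ≤ bmax) :
    |(∫ x in Ioi 0, x ^ s * H √(T * x) / (1 + exp (x - b)))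
        - ∑ n ∈ Finset.range k, a n * T ^ ((n : ℝ) / 2)
            * ∫ x in Ioi 0, x ^ (s + n / 2) / (1 + exp (x - b))|
      ≤ C * exp bmax * (Gamma (s + k / 2 + 1) + Gamma (s + N / 2 + 1)) * T ^ ((k : ℝ) / 2) := by
  set R := fun y => H y - ∑ n ∈ Finset.range k, a n * y ^ n
  have hRc : ContinuousOn R (Ici 0) := hH.sub (by fun_prop)
  have hsplit : ∀ x ∈ Ioi (0 : ℝ), x ^ s * H √(T * x) / (1 + exp (x - b))
      = x ^ s * R √(T * x) / (1 + exp (x - b)) + ∑ n ∈ Finset.range k,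
        a n * T ^ ((n : ℝ) / 2) * (x ^ (s + n / 2) / (1 + exp (x - b))) := by
    intro x (hx : 0 < x)
    have hsum : ∑ n ∈ Finset.range k,
          a n * T ^ ((n : ℝ) / 2) * (x ^ (s + n / 2) / (1 + exp (x - b)))
        = x ^ s * (∑ n ∈ Finset.range k, a n * √(T * x) ^ n) / (1 + exp (x - b)) := by
      rw [Finset.mul_sum, Finset.sum_div]
      refine Finset.sum_congr rfl fun n _ => ?_
      rw [sqrt_mul_pow hT.le hx.le, rpow_add hx]
      ring
    rw [hsum]
    ring
  have hterm : ∀ n ∈ Finset.range k, IntegrableOn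
      (fun x => a n * T ^ ((n : ℝ) / 2) * (x ^ (s + n / 2) / (1 + exp (x - b)))) (Ioi 0) :=
    fun n _ =>
      (integrableOn_rpow_div_one_add_exp (neg_one_lt_zero.trans_le (by positivity)) b).const_mul _
  rw [setIntegral_congr_fun measurableSet_Ioi hsplit,
    integral_add (integrableOn_fermi_remainder hRc hs hkN hR hT hT1 hb)
      (integrable_finsetSum _ hterm),
    integral_finsetSum _ hterm]
  simp only [integral_const_mul, add_sub_cancel_right]
  exact abs_integral_fermi_remainder_le hs hkN hR hT hT1 hb

end Remainder

lemma integral_fermi_eq_rescaled {m T : ℝ} (hm : 0 < m) (hT : 0 < T) {D : ℕ} (hD : 2 ≤ D)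
    (G : ℝ → ℝ) (b : ℝ) :
    ∫ p in Ioi 0, p ^ (D - 1) * G p / (exp ((√(p ^ 2 + m ^ 2) - (m + b * (m * T))) / (m * T)) + 1)
      = m ^ D * T ^ ((D : ℝ) / 2) * ∫ x in Ioi 0,
          x ^ (((D : ℝ) - 2) / 2) * fermiProfile m (((D : ℝ) - 2) / 2) G √(T * x)
            / (1 + exp (x - b)) := by
  rw [integral_Ioi_eq_integral_energy_subst hm hT, ← integral_const_mul, ← integral_const_mul]
  exact setIntegral_congr_fun measurableSet_Ioi fun x hx =>
    fermi_integrand_energy_subst hm hT hx hD G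

lemma abs_fermi_integral_sub_sum_le {m T b bmax C : ℝ} {D k N : ℕ} {G : ℝ → ℝ} (a : ℕ → ℝ)
    (hm : 0 < m) (hD : 2 ≤ D) (hkN : k ≤ N)
    (hH : ContinuousOn (fermiProfile m (((D : ℝ) - 2) / 2) G) (Ici 0))
    (hR : ∀ y ≥ 0, |fermiProfile m (((D : ℝ) - 2) / 2) G y - ∑ n ∈ Finset.range k, a n * y ^ n|
      ≤ C * (y ^ k + y ^ N))
    (hT : 0 < T) (hT1 : T ≤ 1) (hb : b ≤ bmax) :
    |(∫ p in Ioi 0, p ^ (D - 1) * G p /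
          (exp ((√(p ^ 2 + m ^ 2) - (m + b * (m * T))) / (m * T)) + 1))
        - ∑ n ∈ Finset.range k, a n * m ^ D * T ^ (((n : ℝ) + D) / 2)
            * ∫ x in Ioi 0, x ^ (((n : ℝ) + D - 2) / 2) / (1 + exp (x - b))|
      ≤ m ^ D * (C * exp bmax * (Gamma (((D : ℝ) - 2) / 2 + k / 2 + 1)
          + Gamma (((D : ℝ) - 2) / 2 + N / 2 + 1))) * T ^ (((k : ℝ) + D) / 2) := by
  have hr : 0 ≤ ((D : ℝ) - 2) / 2 := div_nonneg (sub_nonneg.2 (by exact_mod_cast hD)) zero_le_two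
  have hterm : ∀ n ∈ Finset.range k,
      a n * m ^ D * T ^ (((n : ℝ) + D) / 2)
        * ∫ x in Ioi 0, x ^ (((n : ℝ) + D - 2) / 2) / (1 + exp (x - b))
      = m ^ D * T ^ ((D : ℝ) / 2) * (a n * T ^ ((n : ℝ) / 2)
        * ∫ x in Ioi 0, x ^ (((D : ℝ) - 2) / 2 + n / 2) / (1 + exp (x - b))) := by
    intro n _
    rw [show ((n : ℝ) + D - 2) / 2 = ((D : ℝ) - 2) / 2 + n / 2 by ring,
      show ((n : ℝ) + D) / 2 = (D : ℝ) / 2 + n / 2 by ring, rpow_add hT]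
    ring
  rw [integral_fermi_eq_rescaled hm hT hD G b, Finset.sum_congr rfl hterm, ← Finset.mul_sum,
    ← mul_sub, abs_mul, abs_of_pos (by positivity),
    show ((k : ℝ) + D) / 2 = (D : ℝ) / 2 + k / 2 by ring, rpow_add hT]
  calc _ ≤ m ^ D * T ^ ((D : ℝ) / 2) * (C * exp bmax * (Gamma (((D : ℝ) - 2) / 2 + k / 2 + 1)
          + Gamma (((D : ℝ) - 2) / 2 + N / 2 + 1)) * T ^ ((k : ℝ) / 2)) := by
        gcongr
        exact abs_integral_fermi_sub_sum_le hH a hr hkN hR hT hT1 hb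
    _ = _ := by ring

theorem fermi_integral_expansion_mu_near_m_general (m : ℝ) (hm : 0 < m) (D : ℕ) (hD : 2 ≤ D)
    (k : ℕ)
    (G : ℝ → ℝ) (hG : ContDiffOn ℝ k G (Set.Ici 0))
    (hbound : ∀ n ≤ k, ∃ C > (0 : ℝ), ∃ q > (0 : ℝ), ∀ p ≥ (0 : ℝ),
      |iteratedDerivWithin n G (Set.Ici 0) p| ≤ C * (1 + p) ^ q)
    (bmax : ℝ) :
    ∃ C' > (0 : ℝ), ∃ T₀ > (0 : ℝ), ∀ Tt : ℝ, 0 < Tt → Tt < T₀ → ∀ b ≤ bmax,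
      |(∫ p in Set.Ioi (0 : ℝ), p ^ (D - 1) * G p /
            (Real.exp ((Real.sqrt (p ^ 2 + m ^ 2) - (m + b * (m * Tt))) / (m * Tt)) + 1))
          - ∑ n ∈ Finset.range k,
              (iteratedDerivWithin n
                  (fun y => (y ^ 2 + 1) * (y ^ 2 + 2) ^ (((D : ℝ) - 2) / 2)
                    * G (m * y * Real.sqrt (y ^ 2 + 2))) (Set.Ici 0) 0 / n.factorial)
                * m ^ D * Tt ^ (((n : ℝ) + D) / 2)
                * ∫ x in Set.Ioi (0 : ℝ), x ^ (((n : ℝ) + D - 2) / 2) / (1 + Real.exp (x - b))|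
        ≤ C' * Tt ^ (((k : ℝ) + D) / 2) := by
  have hr : 0 ≤ ((D : ℝ) - 2) / 2 := div_nonneg (sub_nonneg.2 (by exact_mod_cast hD)) zero_le_two
  have hH := contDiffOn_fermiProfile hm.le (((D : ℝ) - 2) / 2) hG
  obtain ⟨C, -, q, hq, hGb⟩ := hbound 0 (Nat.zero_le k)
  obtain ⟨C₁, hC₁, N, hkN, hR⟩ := exists_taylor_remainder_le hH
    fun y hy => abs_fermiProfile_le hm.le hr hq.le (by simpa using hGb) hy
  refine ⟨m ^ D * (C₁ * exp bmax * (Gamma (((D : ℝ) - 2) / 2 + k / 2 + 1)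
    + Gamma (((D : ℝ) - 2) / 2 + N / 2 + 1))), by positivity, 1, one_pos,
    fun T hT hT1 b hb => abs_fermi_integral_sub_sum_le _ hm hD hkN hH.continuousOn hR hT hT1.le hb⟩

/-- Expansion of Fermi-Dirac integrals in the regime `μ = m + bT`, `T̃ = T/m → 0⁺`:
`∫_0^∞ p^{D−1} G(p) f_FD(p) dp = Σ_{n<k} a_n(m) m^D T̃^{(n+D)/2} ∫_0^∞ x^{(n+D−2)/2}/(1+e^{x−b}) dx
+ O(T̃^{(k+D)/2})`, uniformly in `b` on any set bounded above. -/
theorem fermi_integral_expansion_mu_near_m (m : ℝ) (hm : 0 < m) (D : ℕ) (hD : 2 ≤ D)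
    (k : ℕ) (hk : 0 < k)
    (G : ℝ → ℝ) (hG : ContDiffOn ℝ k G (Set.Ici 0))
    (hbound : ∀ n ≤ k, ∃ C > (0 : ℝ), ∃ q > (0 : ℝ), ∀ p ≥ (0 : ℝ),
      |iteratedDerivWithin n G (Set.Ici 0) p| ≤ C * (1 + p) ^ q)
    (bmax : ℝ) :
    ∃ C' > (0 : ℝ), ∃ T₀ > (0 : ℝ), ∀ Tt : ℝ, 0 < Tt → Tt < T₀ → ∀ b ≤ bmax,
      |(∫ p in Set.Ioi (0 : ℝ), p ^ (D - 1) * G p /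
            (Real.exp ((Real.sqrt (p ^ 2 + m ^ 2) - (m + b * (m * Tt))) / (m * Tt)) + 1))
          - ∑ n ∈ Finset.range k,
              (iteratedDerivWithin n
                  (fun y => (y ^ 2 + 1) * (y ^ 2 + 2) ^ (((D : ℝ) - 2) / 2)
                    * G (m * y * Real.sqrt (y ^ 2 + 2))) (Set.Ici 0) 0 / n.factorial)
                * m ^ D * Tt ^ (((n : ℝ) + D) / 2)
                * ∫ x in Set.Ioi (0 : ℝ), x ^ (((n : ℝ) + D - 2) / 2) / (1 + Real.exp (x - b))|
        ≤ C' * Tt ^ (((k : ℝ) + D) / 2) :=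
  fermi_integral_expansion_mu_near_m_general m hm D hD k G hG hbound bmax
end

section
/- For every real s > 0 with s ≠ 1, ∫_0^∞ u^s / (e^{u/2} + e^{−u/2})² du = s·(1 − 2^{1−s})·Γ(s)·ζ(s), where Γ is the Gamma function and ζ is the (analytically continued) Riemann zeta function; and for s = 1, ∫_0^∞ u / (e^{u/2} + e^{−u/2})² du = ln(2). -/
/-!
Since `1 / (e^{u/2} + e^{-u/2})² = e^{-u} / (1 + e^{-u})² = ∑ₙ (-1)^{n+1} n e^{-nu}`, termwise
integration identifies the integral, a Mellin transform at `s + 1`, with `Γ(s + 1) η(s)` for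
`s > 1`, where `η(s) = ∑ₙ (-1)^{n+1} n^{-s} = (1 - 2^{1-s}) ζ(s)` is the Dirichlet eta function.
Both sides are holomorphic on `re s > 0` (the kernel is bounded and decays exponentially; `η` is
the `L`-function of a sign pattern mod 2 with vanishing sum, hence entire), so the identity
persists there. At `s = 1`, `η(1) = lim (1 - 2^{1-s}) ζ(s) = log 2`: the derivative of
`1 - 2^{1-s}` at `1` times the residue of `ζ`.
-/

open MeasureTheory Real Set Filter Topology

noncomputable def alternatingSign (j : ZMod 2) : ℂ := if j = 0 then -1 else 1

noncomputable def dirichletEta : ℂ → ℂ := ZMod.LFunction alternatingSign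

lemma alternatingSign_natCast (n : ℕ) : alternatingSign n = -(-1) ^ n := by
  rw [← ZMod.natCast_mod, neg_one_pow_eq_pow_mod_two]
  rcases Nat.mod_two_eq_zero_or_one n with h | h <;> simp [h, alternatingSign]

lemma differentiable_dirichletEta : Differentiable ℂ dirichletEta :=
  ZMod.differentiable_LFunction_of_sum_zero <| by
    simp [ZMod, Fin.sum_univ_two, alternatingSign]

lemma neg_neg_one_pow_eq_two_mul_trivChar_sub_one (n : ℕ) :
    -(-1 : ℂ) ^ n = 2 * (1 : DirichletCharacter ℂ 2) n - 1 := by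
  rw [← ZMod.natCast_mod, neg_one_pow_eq_pow_mod_two]
  rcases Nat.mod_two_eq_zero_or_one n with h | h <;> rw [h] <;> norm_num [MulChar.map_zero]

lemma LSeries_neg_neg_one_pow {s : ℂ} (hs : 1 < s.re) :
    LSeries (fun n ↦ -(-1 : ℂ) ^ n) s = (1 - 2 ^ (1 - s)) * riemannZeta s := by
  have hχ := (1 : DirichletCharacter ℂ 2).LSeriesSummable_of_one_lt_re hs
  have hcoeff : (fun n : ℕ ↦ -(-1 : ℂ) ^ n)
      = (2 : ℂ) • (fun n : ℕ ↦ (1 : DirichletCharacter ℂ 2) n) - 1 := by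
    ext n; simp [neg_neg_one_pow_eq_two_mul_trivChar_sub_one]
  have hL : (1 : DirichletCharacter ℂ 2).LFunction s = (1 - 2 ^ (-s)) * riemannZeta s := by
    simpa [Nat.prime_two.primeFactors] using
      DirichletCharacter.LFunctionTrivChar_eq_mul_riemannZeta (N := 2) (s := s)
        (by rintro rfl; norm_num at hs)
  rw [hcoeff, LSeries_sub (hχ.smul 2) (LSeriesSummable_one_iff.mpr hs), LSeries_smul,
    ← DirichletCharacter.LFunction_eq_LSeries _ hs, hL, LSeries_one_eq_riemannZeta hs,
    sub_eq_add_neg (1 : ℂ) s, Complex.cpow_add _ _ two_ne_zero, Complex.cpow_one]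
  ring

lemma dirichletEta_eq_LSeries {s : ℂ} (hs : 1 < s.re) :
    dirichletEta s = LSeries (fun n ↦ -(-1 : ℂ) ^ n) s := by
  simp only [dirichletEta, ZMod.LFunction_eq_LSeries _ hs, alternatingSign_natCast]

lemma dirichletEta_eq {s : ℂ} (hs : s ≠ 1) :
    dirichletEta s = (1 - 2 ^ (1 - s)) * riemannZeta s := by
  have hU : IsOpen ({1}ᶜ : Set ℂ) := isOpen_compl_singleton
  refine AnalyticOnNhd.eqOn_of_preconnected_of_eventuallyEq (z₀ := 2)
    (g := fun z ↦ (1 - 2 ^ (1 - z)) * riemannZeta z)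
    (differentiable_dirichletEta.differentiableOn.analyticOnNhd hU)
    (DifferentiableOn.analyticOnNhd (fun z hz ↦ ?_) hU)
    (isConnected_compl_singleton_of_one_lt_rank (by simp) _).isPreconnected
    (by norm_num) ?_ hs
  · have h2 : DifferentiableAt ℂ (fun z : ℂ ↦ (2 : ℂ) ^ (1 - z)) z :=
      (differentiableAt_id.const_sub 1).const_cpow (.inl two_ne_zero)
    exact ((h2.const_sub 1).mul (differentiableAt_riemannZeta hz)).differentiableWithinAt
  · filter_upwards [(isOpen_lt continuous_const Complex.continuous_re).mem_nhds
      (show (1 : ℝ) < (2 : ℂ).re by norm_num)] with z hz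
    rw [dirichletEta_eq_LSeries hz, LSeries_neg_neg_one_pow hz]

lemma tendsto_mul_riemannZeta_of_hasDerivAt {f : ℂ → ℂ} {d : ℂ} (hf : HasDerivAt f d 1)
    (hf1 : f 1 = 0) : Tendsto (fun s ↦ f s * riemannZeta s) (𝓝[≠] 1) (𝓝 d) := by
  have h := (hasDerivAt_iff_tendsto_slope.mp hf).mul riemannZeta_residue_one
  rw [mul_one] at h
  refine h.congr' (eventually_nhdsWithin_of_forall fun s hs ↦ ?_)
  rw [slope_def_field, hf1, sub_zero]
  field_simp [sub_ne_zero.mpr hs]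

lemma dirichletEta_one : dirichletEta 1 = Real.log 2 := by
  have hderiv : HasDerivAt (fun s : ℂ ↦ 1 - 2 ^ (1 - s)) (Complex.log 2) 1 := by
    simpa using
      (((hasDerivAt_id (1 : ℂ)).const_sub 1).const_cpow (c := 2) (.inl two_ne_zero)).const_sub 1
  have hη : Tendsto dirichletEta (𝓝[≠] 1) (𝓝 (dirichletEta 1)) :=
    differentiable_dirichletEta.continuous.continuousAt.continuousWithinAt
  have hη' :
      Tendsto (fun s ↦ (1 - 2 ^ (1 - s)) * riemannZeta s) (𝓝[≠] 1) (𝓝 (dirichletEta 1)) :=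
    hη.congr' (eventually_nhdsWithin_of_forall fun s hs ↦ dirichletEta_eq hs)
  rw [tendsto_nhds_unique hη' (tendsto_mul_riemannZeta_of_hasDerivAt hderiv (by norm_num)),
    Complex.ofReal_log zero_le_two]
  norm_num

noncomputable def fermiKernel (u : ℝ) : ℝ := 1 / (exp (u / 2) + exp (-u / 2)) ^ 2

lemma mul_fermiKernel (x u : ℝ) : x * fermiKernel u = x / (exp (u / 2) + exp (-u / 2)) ^ 2 :=
  mul_one_div _ _

lemma fermiKernel_pos (u : ℝ) : 0 < fermiKernel u := by
  unfold fermiKernel; positivity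

lemma fermiKernel_eq (u : ℝ) : fermiKernel u = exp (-u) / (1 + exp (-u)) ^ 2 := by
  have h : exp (u / 2) + exp (-u / 2) = exp (u / 2) * (1 + exp (-u)) := by
    rw [mul_add, mul_one, ← exp_add]; ring_nf
  rw [fermiKernel, h, mul_pow, ← exp_nat_mul, exp_neg]
  field_simp
  ring_nf

lemma fermiKernel_le_exp_neg (u : ℝ) : fermiKernel u ≤ exp (-u) := by
  rw [fermiKernel_eq]
  exact div_le_self (exp_pos _).le (one_le_pow₀ (le_add_of_nonneg_right (exp_pos _).le))

lemma fermiKernel_le_one (u : ℝ) : fermiKernel u ≤ 1 := by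
  rw [fermiKernel_eq, div_le_one (by positivity)]
  nlinarith [exp_pos (-u)]

lemma continuous_fermiKernel : Continuous fermiKernel := by
  unfold fermiKernel
  exact continuous_const.div (by fun_prop) fun u ↦ by positivity

lemma hasSum_fermiKernel {t : ℝ} (ht : 0 < t) :
    HasSum (fun n : ℕ ↦ (-(-1 : ℂ) ^ n * n) * rexp (-n * t)) (fermiKernel t) := by
  have hx : ‖-(rexp (-t) : ℂ)‖ < 1 := by
    rw [norm_neg, Complex.norm_real, norm_of_nonneg (exp_pos _).le, exp_lt_one_iff]
    linarith
  have hval : -(-(rexp (-t) : ℂ) / (1 - -(rexp (-t) : ℂ)) ^ 2) = fermiKernel t := by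
    rw [fermiKernel_eq]
    push_cast
    ring
  refine (hval ▸ (hasSum_coe_mul_geometric_of_norm_lt_one hx).neg).congr_fun fun n ↦ ?_
  rw [show -(n : ℝ) * t = n * -t by ring, exp_nat_mul, neg_pow (rexp (-t) : ℂ)]
  push_cast
  ring

lemma mellin_fermiKernel_of_one_lt_re {s : ℂ} (hs : 1 < s.re) :
    mellin (fun t ↦ (fermiKernel t : ℂ)) (s + 1) = Complex.Gamma (s + 1) * dirichletEta s := by
  have hs1 : 0 < (s + 1).re := by rw [Complex.add_re, Complex.one_re]; linarith
  have hp (n : ℕ) : -(-1 : ℂ) ^ n * n = 0 ∨ 0 < (n : ℝ) := by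
    rcases n.eq_zero_or_pos with rfl | hn
    · simp
    · exact .inr (Nat.cast_pos.mpr hn)
  have hsum : Summable fun n : ℕ ↦ ‖-(-1 : ℂ) ^ n * n‖ / (n : ℝ) ^ (s + 1).re := by
    refine (Real.summable_one_div_nat_rpow.mpr hs).congr fun n ↦ ?_
    rcases n.eq_zero_or_pos with rfl | hn
    · simp [Real.zero_rpow (by linarith : s.re ≠ 0)]
    · simp only [one_div, neg_mul, norm_neg, Complex.norm_mul, norm_pow, norm_one, one_pow,
        RCLike.norm_natCast, one_mul, Complex.add_re, Complex.one_re,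
        rpow_add (Nat.cast_pos.mpr hn), rpow_one]
      field_simp
  have key := hasSum_mellin hp hs1 (fun t ht ↦ hasSum_fermiKernel ht) hsum
  rw [dirichletEta_eq_LSeries hs, LSeries, ← tsum_mul_left, ← key.tsum_eq]
  congr 1 with n
  rcases n.eq_zero_or_pos with rfl | hn
  · simp
  · have hn' : (n : ℂ) ≠ 0 := Nat.cast_ne_zero.mpr hn.ne'
    rw [LSeries.term_of_ne_zero hn.ne', Complex.ofReal_natCast, Complex.cpow_add _ _ hn',
      Complex.cpow_one]
    field_simp

lemma differentiableAt_mellin_fermiKernel {w : ℂ} (hw : 0 < w.re) :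
    DifferentiableAt ℂ (mellin (fun t ↦ (fermiKernel t : ℂ))) w := by
  refine mellin_differentiableAt_of_isBigO_rpow_exp (b := 0) one_pos
    ((Complex.continuous_ofReal.comp continuous_fermiKernel).locallyIntegrable
      |>.locallyIntegrableOn _)
    (Asymptotics.isBigO_of_le _ fun t ↦ ?_) (Asymptotics.isBigO_of_le _ fun t ↦ ?_) hw
  · rw [Complex.norm_real, norm_of_nonneg (fermiKernel_pos t).le, norm_of_nonneg (exp_pos _).le,
      neg_one_mul]
    exact fermiKernel_le_exp_neg t
  · rw [Complex.norm_real, norm_of_nonneg (fermiKernel_pos t).le, neg_zero, rpow_zero, norm_one]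
    exact fermiKernel_le_one t

lemma mellin_fermiKernel {s : ℂ} (hs : 0 < s.re) :
    mellin (fun t ↦ (fermiKernel t : ℂ)) (s + 1) = Complex.Gamma (s + 1) * dirichletEta s := by
  have hU : IsOpen {z : ℂ | 0 < z.re} := isOpen_lt continuous_const Complex.continuous_re
  refine AnalyticOnNhd.eqOn_of_preconnected_of_eventuallyEq (z₀ := 2)
    (f := fun z ↦ mellin (fun t ↦ (fermiKernel t : ℂ)) (z + 1))
    (g := fun z ↦ Complex.Gamma (z + 1) * dirichletEta z)
    (DifferentiableOn.analyticOnNhd (fun z hz ↦ ?_) hU)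
    (DifferentiableOn.analyticOnNhd (fun z hz ↦ ?_) hU)
    (convex_halfSpace_re_gt 0).isPreconnected (by norm_num) ?_ hs
  · have hz1 : 0 < (z + 1).re := by rw [Complex.add_re, Complex.one_re]; linarith [hz.out]
    exact ((differentiableAt_mellin_fermiKernel hz1).comp z
      (differentiableAt_id.add_const 1)).differentiableWithinAt
  · have hΓ : DifferentiableAt ℂ Complex.Gamma (z + 1) :=
      Complex.differentiableAt_Gamma _ fun m h ↦ by
        have := congrArg Complex.re h
        simp only [Complex.add_re, Complex.one_re, Complex.neg_re, Complex.natCast_re] at this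
        linarith [hz.out, m.cast_nonneg (α := ℝ)]
    exact ((hΓ.comp z (differentiableAt_id.add_const 1)).mul
      (differentiable_dirichletEta z)).differentiableWithinAt
  · filter_upwards [(isOpen_lt continuous_const Complex.continuous_re).mem_nhds
      (show (1 : ℝ) < (2 : ℂ).re by norm_num)] with z hz
    exact mellin_fermiKernel_of_one_lt_re hz

lemma integral_rpow_mul_fermiKernel {s : ℝ} (hs : 0 < s) :
    ((∫ u in Ioi (0 : ℝ), u ^ s * fermiKernel u : ℝ) : ℂ)
      = Complex.Gamma (s + 1) * dirichletEta s := by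
  rw [← mellin_fermiKernel (by simpa using hs), mellin, ← integral_complex_ofReal]
  refine setIntegral_congr_fun measurableSet_Ioi fun u hu ↦ ?_
  rw [add_sub_cancel_right, smul_eq_mul, ← Complex.ofReal_cpow (le_of_lt hu), Complex.ofReal_mul]

lemma integral_rpow_mul_fermiKernel_of_ne_one {s : ℝ} (hs : 0 < s) (hs1 : s ≠ 1) :
    ∫ u in Ioi (0 : ℝ), u ^ s * fermiKernel u
      = s * (1 - 2 ^ (1 - s)) * Gamma s * (riemannZeta s).re := by
  have h := integral_rpow_mul_fermiKernel hs
  have hΓ : Complex.Gamma (s + 1) = (Gamma (s + 1) : ℂ) := by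
    exact_mod_cast Complex.Gamma_ofReal (s + 1)
  have h2 : (2 : ℂ) ^ (1 - (s : ℂ)) = ((2 ^ (1 - s) : ℝ) : ℂ) := by
    rw [Complex.ofReal_cpow zero_le_two]; push_cast; rfl
  rw [dirichletEta_eq (by exact_mod_cast hs1), hΓ, h2, ← mul_assoc, ← Complex.ofReal_one,
    ← Complex.ofReal_sub, ← Complex.ofReal_mul] at h
  rw [← Complex.ofReal_re (∫ _ in _, _), h, Complex.re_ofReal_mul, Gamma_add_one hs.ne']
  ring

lemma integral_mul_fermiKernel : ∫ u in Ioi (0 : ℝ), u * fermiKernel u = log 2 := by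
  have h := integral_rpow_mul_fermiKernel one_pos
  rw [Complex.ofReal_one, Complex.Gamma_add_one 1 one_ne_zero, Complex.Gamma_one, mul_one,
    one_mul, dirichletEta_one] at h
  simp only [rpow_one] at h
  exact_mod_cast h

/-- For `s > 0`, `∫_0^∞ u^s/(e^{u/2}+e^{−u/2})² du = s(1−2^{1−s})Γ(s)ζ(s)` when `s ≠ 1`
(with `ζ` the analytically continued Riemann zeta function), and the integral equals
`ln 2` when `s = 1`. -/
theorem fermi_derivative_moment (s : ℝ) (hs : 0 < s) :
    (s ≠ 1 →
      (∫ u in Set.Ioi (0 : ℝ), u ^ s / (Real.exp (u / 2) + Real.exp (-u / 2)) ^ 2)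
        = s * (1 - 2 ^ (1 - s)) * Real.Gamma s * (riemannZeta (s : ℂ)).re) ∧
    (s = 1 →
      (∫ u in Set.Ioi (0 : ℝ), u / (Real.exp (u / 2) + Real.exp (-u / 2)) ^ 2)
        = Real.log 2) := by
  simp only [← mul_fermiKernel]
  exact ⟨integral_rpow_mul_fermiKernel_of_ne_one hs, fun _ ↦ integral_mul_fermiKernel⟩
end
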